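/- arXiv:1705.10883 — 2 statements merged into one kernel-verified Lean document; each statement's English description precedes it below -/
import Mathlib

section
/- Let t be a decision tree with leaf predictions p_ℓ, x a binary input encoding, and ℓ* = GetLeaf(x,t) the leaf reached by routing x down t. Define dual variables: α_s = max(max_{ℓ ∈ left(s)} (p_ℓ − p_{ℓ*}), 0) if s ∈ RS(ℓ*) and α_s = 0 otherwise; β_s = max(max_{ℓ ∈ right(s)} (p_ℓ − p_{ℓ*}), 0) if s ∈ LS(ℓ*) and β_s = 0 otherwise; γ = p_{ℓ*}. Then (α, β, γ) is feasible for the dual linear program (i.e., α, β ≥ 0 and for every leaf ℓ, Σ_{s : ℓ ∈ left(s)} α_s + Σ_{s : ℓ ∈ right(s)} β_s + γ ≥ p_ℓ), and its dual objective Σ_s α_s q(s,x) + Σ_s β_s (1 − q(s,x)) + γ equals p_{ℓ*}. -/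
inductive BTree : Type
  | leaf : BTree
  | node : BTree → BTree → BTree

namespace BTree

/-- Leaves of a tree, identified by their root-to-node path (`true` = left). -/
def leavesF : BTree → Finset (List Bool)
  | .leaf => {[]}
  | .node l r => (leavesF l).image (List.cons true) ∪ (leavesF r).image (List.cons false)

/-- Splits (internal nodes) of a tree, identified by their root-to-node path. -/
def splitsF : BTree → Finset (List Bool)
  | .leaf => ∅
  | .node l r =>
      insert [] ((splitsF l).image (List.cons true) ∪ (splitsF r).image (List.cons false))

/-- Leaves in the left subtree of split `s`. -/
def leftF (t : BTree) (s : List Bool) : Finset (List Bool) :=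
  (leavesF t).filter (fun ℓ => (s ++ [true]) <+: ℓ)

/-- Leaves in the right subtree of split `s`. -/
def rightF (t : BTree) (s : List Bool) : Finset (List Bool) :=
  (leavesF t).filter (fun ℓ => (s ++ [false]) <+: ℓ)

/-- Splits `s` such that leaf `ℓ` is in the left subtree of `s`. -/
def LSF (t : BTree) (ℓ : List Bool) : Finset (List Bool) :=
  (splitsF t).filter (fun s => (s ++ [true]) <+: ℓ)

/-- Splits `s` such that leaf `ℓ` is in the right subtree of `s`. -/
def RSF (t : BTree) (ℓ : List Bool) : Finset (List Bool) :=
  (splitsF t).filter (fun s => (s ++ [false]) <+: ℓ)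

def getLeafAux (q : List Bool → Bool) : BTree → List Bool → List Bool
  | .leaf, pth => pth
  | .node l r, pth =>
      if q pth then getLeafAux q l (pth ++ [true]) else getLeafAux q r (pth ++ [false])

/-- The leaf reached by routing down tree `t`, taking the left branch at a split `s`
iff the query value `q s` is `true`. -/
def getLeaf (t : BTree) (q : List Bool → Bool) : List Bool := getLeafAux q t []

/-- The numeric value of the 0/1 query at split `s`. -/
def qval (q : List Bool → Bool) (s : List Bool) : ℝ := if q s then 1 else 0

end BTree

/-- Dual variable `α_s = max(max_{ℓ ∈ left(s)} (p_ℓ − p_{ℓ*}), 0)` for `s ∈ RS(ℓ*)`, else `0`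
(the max with `0` is realized by inserting `ℓ*`, where the value is `0`). -/
noncomputable def BTree.alphaDual (t : BTree) (q : List Bool → Bool) (p : List Bool → ℝ)
    (s : List Bool) : ℝ :=
  if s ∈ t.RSF (t.getLeaf q) then
    (insert (t.getLeaf q) (t.leftF s)).sup' (Finset.insert_nonempty _ _)
      (fun ℓ => p ℓ - p (t.getLeaf q))
  else 0

/-- Dual variable `β_s = max(max_{ℓ ∈ right(s)} (p_ℓ − p_{ℓ*}), 0)` for `s ∈ LS(ℓ*)`, else `0`. -/
noncomputable def BTree.betaDual (t : BTree) (q : List Bool → Bool) (p : List Bool → ℝ)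
    (s : List Bool) : ℝ :=
  if s ∈ t.LSF (t.getLeaf q) then
    (insert (t.getLeaf q) (t.rightF s)).sup' (Finset.insert_nonempty _ _)
      (fun ℓ => p ℓ - p (t.getLeaf q))
  else 0

namespace BTree

lemma getLeafAux_eq (t : BTree) : ∀ (q : List Bool → Bool) (pth : List Bool),
    getLeafAux q t pth = pth ++ getLeafAux (fun s => q (pth ++ s)) t [] := by
  induction t with
  | leaf => intro q pth; simp [getLeafAux]
  | node l r ihl ihr =>
    intro q pth
    simp only [getLeafAux, List.append_nil, List.nil_append]
    by_cases h : q pth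
    · rw [if_pos h, if_pos h, ihl q (pth ++ [true]),
        ihl (fun s => q (pth ++ s)) [true]]
      simp [List.append_assoc]
    · rw [if_neg h, if_neg h, ihr q (pth ++ [false]),
        ihr (fun s => q (pth ++ s)) [false]]
      simp [List.append_assoc]

lemma getLeaf_node (l r : BTree) (q : List Bool → Bool) :
    getLeaf (node l r) q =
      if q [] then true :: getLeaf l (fun s => q (true :: s))
      else false :: getLeaf r (fun s => q (false :: s)) := by
  show getLeafAux q (node l r) [] = _
  simp only [getLeafAux, List.nil_append]
  by_cases h : q []
  · rw [if_pos h, if_pos h, getLeafAux_eq l q [true]]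
    simp [getLeaf]
  · rw [if_neg h, if_neg h, getLeafAux_eq r q [false]]
    simp [getLeaf]

lemma getLeaf_mem (t : BTree) (q : List Bool → Bool) : getLeaf t q ∈ leavesF t := by
  induction t generalizing q with
  | leaf => simp [getLeaf, getLeafAux, leavesF]
  | node l r ihl ihr =>
    rw [getLeaf_node]
    by_cases h : q []
    · rw [if_pos h]
      exact Finset.mem_union_left _ (Finset.mem_image_of_mem _ (ihl _))
    · rw [if_neg h]
      exact Finset.mem_union_right _ (Finset.mem_image_of_mem _ (ihr _))

lemma getLeaf_query (t : BTree) : ∀ (q : List Bool → Bool) (s : List Bool) (b : Bool),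
    (s ++ [b]) <+: getLeaf t q → q s = b := by
  induction t with
  | leaf =>
    intro q s b h
    have : getLeaf BTree.leaf q = [] := rfl
    rw [this] at h
    simp [List.prefix_nil] at h
  | node l r ihl ihr =>
    intro q s b h
    rw [getLeaf_node] at h
    by_cases hq : q []
    · rw [if_pos hq] at h
      cases s with
      | nil =>
        simp only [List.nil_append, List.cons_prefix_cons] at h
        rw [h.1]; exact hq
      | cons c s' =>
        simp only [List.cons_append, List.cons_prefix_cons] at h
        obtain ⟨h1, h2⟩ := h
        subst h1
        exact ihl _ s' b h2
    · rw [if_neg hq] at h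
      cases s with
      | nil =>
        simp only [List.nil_append, List.cons_prefix_cons] at h
        rw [h.1]; simpa using hq
      | cons c s' =>
        simp only [List.cons_append, List.cons_prefix_cons] at h
        obtain ⟨h1, h2⟩ := h
        subst h1
        exact ihr _ s' b h2

lemma separating (t : BTree) : ∀ (q : List Bool → Bool), ∀ ℓ ∈ leavesF t, ℓ ≠ getLeaf t q →
    ∃ s ∈ splitsF t, ∃ b : Bool, (s ++ [b]) <+: ℓ ∧ (s ++ [!b]) <+: getLeaf t q := by
  induction t with
  | leaf =>
    intro q ℓ hℓ hne
    simp [leavesF] at hℓ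
    exact absurd (hℓ.trans rfl) hne
  | node l r ihl ihr =>
    intro q ℓ hℓ hne
    rw [getLeaf_node] at hne ⊢
    simp only [leavesF, Finset.mem_union, Finset.mem_image] at hℓ
    by_cases hq : q []
    · rw [if_pos hq] at hne ⊢
      rcases hℓ with ⟨ℓ', hℓ', rfl⟩ | ⟨ℓ', hℓ', rfl⟩
      · have hne' : ℓ' ≠ getLeaf l (fun s => q (true :: s)) := by
          intro hc; exact hne (by rw [hc])
        obtain ⟨s, hs, b, hb1, hb2⟩ := ihl _ ℓ' hℓ' hne'
        refine ⟨true :: s, ?_, b, ?_, ?_⟩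
        · exact Finset.mem_insert_of_mem
            (Finset.mem_union_left _ (Finset.mem_image_of_mem _ hs))
        · simpa [List.cons_prefix_cons] using hb1
        · simpa [List.cons_prefix_cons] using hb2
      · refine ⟨[], Finset.mem_insert_self _ _, false, ?_, ?_⟩
        · simpa [List.cons_prefix_cons] using List.nil_prefix
        · simpa [List.cons_prefix_cons] using List.nil_prefix
    · rw [if_neg hq] at hne ⊢
      rcases hℓ with ⟨ℓ', hℓ', rfl⟩ | ⟨ℓ', hℓ', rfl⟩
      · refine ⟨[], Finset.mem_insert_self _ _, true, ?_, ?_⟩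
        · simpa [List.cons_prefix_cons] using List.nil_prefix
        · simpa [List.cons_prefix_cons] using List.nil_prefix
      · have hne' : ℓ' ≠ getLeaf r (fun s => q (false :: s)) := by
          intro hc; exact hne (by rw [hc])
        obtain ⟨s, hs, b, hb1, hb2⟩ := ihr _ ℓ' hℓ' hne'
        refine ⟨false :: s, ?_, b, ?_, ?_⟩
        · exact Finset.mem_insert_of_mem
            (Finset.mem_union_right _ (Finset.mem_image_of_mem _ hs))
        · simpa [List.cons_prefix_cons] using hb1
        · simpa [List.cons_prefix_cons] using hb2

lemma alphaDual_nonneg (t : BTree) (q : List Bool → Bool) (p : List Bool → ℝ)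
    (s : List Bool) : 0 ≤ t.alphaDual q p s := by
  unfold alphaDual
  split
  · have := Finset.le_sup' (fun ℓ => p ℓ - p (t.getLeaf q))
      (Finset.mem_insert_self (t.getLeaf q) (t.leftF s))
    simpa using this
  · exact le_refl 0

lemma betaDual_nonneg (t : BTree) (q : List Bool → Bool) (p : List Bool → ℝ)
    (s : List Bool) : 0 ≤ t.betaDual q p s := by
  unfold betaDual
  split
  · have := Finset.le_sup' (fun ℓ => p ℓ - p (t.getLeaf q))
      (Finset.mem_insert_self (t.getLeaf q) (t.rightF s))
    simpa using this
  · exact le_refl 0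

end BTree

/-- with `ℓ* = GetLeaf(x,t)` and `γ = p_{ℓ*}`, the proposed `(α, β, γ)` is
dual feasible — `α, β ≥ 0` and for every leaf `ℓ`,
`Σ_{s : ℓ ∈ left(s)} α_s + Σ_{s : ℓ ∈ right(s)} β_s + γ ≥ p_ℓ` — and the dual objective
`Σ_s α_s q(s,x) + Σ_s β_s (1 − q(s,x)) + γ` equals `p_{ℓ*}`. -/
theorem dual_solution_feasible_and_optimal (t : BTree) (q : List Bool → Bool)
    (p : List Bool → ℝ) :
    (∀ s ∈ t.splitsF, 0 ≤ t.alphaDual q p s) ∧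
    (∀ s ∈ t.splitsF, 0 ≤ t.betaDual q p s) ∧
    (∀ ℓ ∈ t.leavesF,
      (∑ s ∈ t.LSF ℓ, t.alphaDual q p s) + (∑ s ∈ t.RSF ℓ, t.betaDual q p s)
        + p (t.getLeaf q) ≥ p ℓ) ∧
    ((∑ s ∈ t.splitsF, t.alphaDual q p s * BTree.qval q s)
        + (∑ s ∈ t.splitsF, t.betaDual q p s * (1 - BTree.qval q s))
        + p (t.getLeaf q) = p (t.getLeaf q)) := by
  refine ⟨fun s _ => t.alphaDual_nonneg q p s, fun s _ => t.betaDual_nonneg q p s, ?_, ?_⟩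
  · intro ℓ hℓ
    by_cases hne : ℓ = t.getLeaf q
    · subst hne
      have h1 : 0 ≤ ∑ s ∈ t.LSF (t.getLeaf q), t.alphaDual q p s :=
        Finset.sum_nonneg fun s _ => t.alphaDual_nonneg q p s
      have h2 : 0 ≤ ∑ s ∈ t.RSF (t.getLeaf q), t.betaDual q p s :=
        Finset.sum_nonneg fun s _ => t.betaDual_nonneg q p s
      linarith
    · obtain ⟨s, hs, b, hb1, hb2⟩ := t.separating q ℓ hℓ hne
      cases b with
      | true =>
        have hsRS : s ∈ t.RSF (t.getLeaf q) :=
          Finset.mem_filter.2 ⟨hs, by simpa using hb2⟩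
        have hsLS : s ∈ t.LSF ℓ := Finset.mem_filter.2 ⟨hs, hb1⟩
        have hmem : ℓ ∈ insert (t.getLeaf q) (t.leftF s) :=
          Finset.mem_insert_of_mem (Finset.mem_filter.2 ⟨hℓ, hb1⟩)
        have hα : p ℓ - p (t.getLeaf q) ≤ t.alphaDual q p s := by
          unfold BTree.alphaDual
          rw [if_pos hsRS]
          exact Finset.le_sup' (fun ℓ => p ℓ - p (t.getLeaf q)) hmem
        have h1 : t.alphaDual q p s ≤ ∑ s ∈ t.LSF ℓ, t.alphaDual q p s :=
          Finset.single_le_sum (fun s _ => t.alphaDual_nonneg q p s) hsLS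
        have h2 : 0 ≤ ∑ s ∈ t.RSF ℓ, t.betaDual q p s :=
          Finset.sum_nonneg fun s _ => t.betaDual_nonneg q p s
        linarith
      | false =>
        have hsLSstar : s ∈ t.LSF (t.getLeaf q) :=
          Finset.mem_filter.2 ⟨hs, by simpa using hb2⟩
        have hsRS : s ∈ t.RSF ℓ := Finset.mem_filter.2 ⟨hs, hb1⟩
        have hmem : ℓ ∈ insert (t.getLeaf q) (t.rightF s) :=
          Finset.mem_insert_of_mem (Finset.mem_filter.2 ⟨hℓ, hb1⟩)
        have hβ : p ℓ - p (t.getLeaf q) ≤ t.betaDual q p s := by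
          unfold BTree.betaDual
          rw [if_pos hsLSstar]
          exact Finset.le_sup' (fun ℓ => p ℓ - p (t.getLeaf q)) hmem
        have h1 : t.betaDual q p s ≤ ∑ s ∈ t.RSF ℓ, t.betaDual q p s :=
          Finset.single_le_sum (fun s _ => t.betaDual_nonneg q p s) hsRS
        have h2 : 0 ≤ ∑ s ∈ t.LSF ℓ, t.alphaDual q p s :=
          Finset.sum_nonneg fun s _ => t.alphaDual_nonneg q p s
        linarith
  · have hA : ∀ s ∈ t.splitsF, t.alphaDual q p s * BTree.qval q s = 0 := by
      intro s _
      by_cases h : s ∈ t.RSF (t.getLeaf q)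
      · have hpre := (Finset.mem_filter.1 h).2
        have hq : q s = false := t.getLeaf_query q s false hpre
        simp [BTree.qval, hq]
      · simp [BTree.alphaDual, h]
    have hB : ∀ s ∈ t.splitsF, t.betaDual q p s * (1 - BTree.qval q s) = 0 := by
      intro s _
      by_cases h : s ∈ t.LSF (t.getLeaf q)
      · have hpre := (Finset.mem_filter.1 h).2
        have hq : q s = true := t.getLeaf_query q s true hpre
        simp [BTree.qval, hq]
      · simp [BTree.betaDual, h]
    rw [Finset.sum_eq_zero hA, Finset.sum_eq_zero hB]
    ring
end

section
/- Lower-bound constraint derivation: let t be a tree, ℓ a leaf, and (x, y) satisfy Σ_{ℓ'} y_{t,ℓ'} = 1, y ≥ 0, and for every split s, Σ_{ℓ' ∈ left(s)} y_{t,ℓ'} ≤ q(s,x) and Σ_{ℓ' ∈ right(s)} y_{t,ℓ'} ≤ 1 − q(s,x), where each q(s,x) ∈ [0,1]. Then y_{t,ℓ} ≥ Σ_{s ∈ LS(ℓ)} q(s,x) + Σ_{s ∈ RS(ℓ)} (1 − q(s,x)) − (|LS(ℓ)| + |RS(ℓ)| − 1). -/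
/-- Feasibility for the LP relaxation of the tree ensemble MIO formulation (per tree), with
relaxed query values `q s ∈ [0,1]` (each `q s` is a fixed affine function of the relaxed `x`):
`Σ_ℓ y_ℓ = 1`, `y ≥ 0`, and for each split `s`, `Σ_{ℓ∈left(s)} y_ℓ ≤ q s` and
`Σ_{ℓ∈right(s)} y_ℓ ≤ 1 − q s`. -/
def BTree.FeasRelax (t : BTree) (q : List Bool → ℝ) (y : List Bool → ℝ) : Prop :=
  ((∑ ℓ ∈ t.leavesF, y ℓ) = 1) ∧
  (∀ ℓ ∈ t.leavesF, 0 ≤ y ℓ) ∧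
  (∀ s ∈ t.splitsF, (∑ ℓ ∈ t.leftF s, y ℓ) ≤ q s) ∧
  (∀ s ∈ t.splitsF, (∑ ℓ ∈ t.rightF s, y ℓ) ≤ 1 - q s)

namespace BTree

lemma cons_inj (a : Bool) : Function.Injective (List.cons a) :=
  fun x y h => by simpa using h

lemma leftF_node_true (l r : BTree) (s : List Bool) :
    (node l r).leftF (true :: s) = (l.leftF s).image (List.cons true) := by
  simp [leftF, leavesF, Finset.filter_union, Finset.filter_image,
    List.cons_append, List.cons_prefix_cons]

lemma leftF_node_false (l r : BTree) (s : List Bool) :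
    (node l r).leftF (false :: s) = (r.leftF s).image (List.cons false) := by
  simp [leftF, leavesF, Finset.filter_union, Finset.filter_image,
    List.cons_append, List.cons_prefix_cons]

lemma rightF_node_true (l r : BTree) (s : List Bool) :
    (node l r).rightF (true :: s) = (l.rightF s).image (List.cons true) := by
  simp [rightF, leavesF, Finset.filter_union, Finset.filter_image,
    List.cons_append, List.cons_prefix_cons]

lemma rightF_node_false (l r : BTree) (s : List Bool) :
    (node l r).rightF (false :: s) = (r.rightF s).image (List.cons false) := by
  simp [rightF, leavesF, Finset.filter_union, Finset.filter_image,
    List.cons_append, List.cons_prefix_cons]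

lemma leftF_node_nil (l r : BTree) :
    (node l r).leftF [] = (l.leavesF).image (List.cons true) := by
  simp [leftF, leavesF, Finset.filter_union, Finset.filter_image,
    List.cons_prefix_cons]

lemma rightF_node_nil (l r : BTree) :
    (node l r).rightF [] = (r.leavesF).image (List.cons false) := by
  simp [rightF, leavesF, Finset.filter_union, Finset.filter_image,
    List.cons_prefix_cons]

lemma LSF_node_cons_true (l r : BTree) (ℓ : List Bool) :
    (node l r).LSF (true :: ℓ) = insert [] ((l.LSF ℓ).image (List.cons true)) := by
  ext p
  simp only [LSF, splitsF, Finset.mem_filter, Finset.mem_insert, Finset.mem_union,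
    Finset.mem_image]
  constructor
  · rintro ⟨(rfl | ⟨x, hx, rfl⟩ | ⟨x, hx, rfl⟩), hp⟩ <;>
      simp_all [List.cons_append, List.cons_prefix_cons]
  · rintro (rfl | ⟨x, ⟨hx, hpre⟩, rfl⟩)
    · simp [List.cons_prefix_cons]
    · exact ⟨Or.inr (Or.inl ⟨x, hx, rfl⟩),
        by simpa [List.cons_append, List.cons_prefix_cons] using hpre⟩

lemma RSF_node_cons_true (l r : BTree) (ℓ : List Bool) :
    (node l r).RSF (true :: ℓ) = (l.RSF ℓ).image (List.cons true) := by
  ext p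
  simp only [RSF, splitsF, Finset.mem_filter, Finset.mem_insert, Finset.mem_union,
    Finset.mem_image]
  constructor
  · rintro ⟨(rfl | ⟨x, hx, rfl⟩ | ⟨x, hx, rfl⟩), hp⟩ <;>
      simp_all [List.cons_append, List.cons_prefix_cons]
  · rintro ⟨x, ⟨hx, hpre⟩, rfl⟩
    exact ⟨Or.inr (Or.inl ⟨x, hx, rfl⟩),
      by simpa [List.cons_append, List.cons_prefix_cons] using hpre⟩

lemma RSF_node_cons_false (l r : BTree) (ℓ : List Bool) :
    (node l r).RSF (false :: ℓ) = insert [] ((r.RSF ℓ).image (List.cons false)) := by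
  ext p
  simp only [RSF, splitsF, Finset.mem_filter, Finset.mem_insert, Finset.mem_union,
    Finset.mem_image]
  constructor
  · rintro ⟨(rfl | ⟨x, hx, rfl⟩ | ⟨x, hx, rfl⟩), hp⟩ <;>
      simp_all [List.cons_append, List.cons_prefix_cons]
  · rintro (rfl | ⟨x, ⟨hx, hpre⟩, rfl⟩)
    · simp [List.cons_prefix_cons]
    · exact ⟨Or.inr (Or.inr ⟨x, hx, rfl⟩),
        by simpa [List.cons_append, List.cons_prefix_cons] using hpre⟩

lemma LSF_node_cons_false (l r : BTree) (ℓ : List Bool) :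
    (node l r).LSF (false :: ℓ) = (r.LSF ℓ).image (List.cons false) := by
  ext p
  simp only [LSF, splitsF, Finset.mem_filter, Finset.mem_insert, Finset.mem_union,
    Finset.mem_image]
  constructor
  · rintro ⟨(rfl | ⟨x, hx, rfl⟩ | ⟨x, hx, rfl⟩), hp⟩ <;>
      simp_all [List.cons_append, List.cons_prefix_cons]
  · rintro ⟨x, ⟨hx, hpre⟩, rfl⟩
    exact ⟨Or.inr (Or.inr ⟨x, hx, rfl⟩),
      by simpa [List.cons_append, List.cons_prefix_cons] using hpre⟩

lemma key_induction (t : BTree) :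
    ∀ (q y : List Bool → ℝ),
    (∀ s ∈ t.splitsF, (∑ p ∈ t.leftF s, y p) ≤ q s) →
    (∀ s ∈ t.splitsF, (∑ p ∈ t.rightF s, y p) ≤ 1 - q s) →
    ∀ ℓ ∈ t.leavesF,
    (∑ p ∈ t.leavesF, y p) - y ℓ ≤
      (∑ s ∈ t.LSF ℓ, (1 - q s)) + (∑ s ∈ t.RSF ℓ, q s) := by
  induction t with
  | leaf =>
      intro q y _ _ ℓ hℓ
      simp only [leavesF, Finset.mem_singleton] at hℓ
      subst hℓ
      simp [leavesF, LSF, RSF, splitsF]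
  | node l r ihl ihr =>
      intro q y hL hR ℓ hℓ
      have hsum : (∑ p ∈ (node l r).leavesF, y p) =
          (∑ p ∈ l.leavesF, y (true :: p)) + (∑ p ∈ r.leavesF, y (false :: p)) := by
        rw [leavesF, Finset.sum_union, Finset.sum_image (fun a _ b _ h => cons_inj _ h),
          Finset.sum_image (fun a _ b _ h => cons_inj _ h)]
        · rw [Finset.disjoint_left]
          intro p hp hp'
          simp only [Finset.mem_image] at hp hp'
          obtain ⟨x, _, rfl⟩ := hp
          obtain ⟨z, _, h⟩ := hp'
          simp at h
      have hnilmem : ([] : List Bool) ∈ (node l r).splitsF := by simp [splitsF]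
      have hrootL : (∑ p ∈ l.leavesF, y (true :: p)) ≤ q [] := by
        have := hL [] hnilmem
        rwa [leftF_node_nil, Finset.sum_image (fun a _ b _ h => cons_inj _ h)] at this
      have hrootR : (∑ p ∈ r.leavesF, y (false :: p)) ≤ 1 - q [] := by
        have := hR [] hnilmem
        rwa [rightF_node_nil, Finset.sum_image (fun a _ b _ h => cons_inj _ h)] at this
      simp only [leavesF, Finset.mem_union, Finset.mem_image] at hℓ
      rcases hℓ with ⟨ℓ', hℓ', rfl⟩ | ⟨ℓ', hℓ', rfl⟩
      · -- left child
        have hmem : ∀ s ∈ l.splitsF, (true :: s) ∈ (node l r).splitsF := by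
          intro s hs; simp only [splitsF, Finset.mem_insert, Finset.mem_union,
            Finset.mem_image]; exact Or.inr (Or.inl ⟨s, hs, rfl⟩)
        have hL' : ∀ s ∈ l.splitsF,
            (∑ p ∈ l.leftF s, y (true :: p)) ≤ q (true :: s) := by
          intro s hs
          have := hL _ (hmem s hs)
          rwa [leftF_node_true,
            Finset.sum_image (fun a _ b _ h => cons_inj _ h)] at this
        have hR' : ∀ s ∈ l.splitsF,
            (∑ p ∈ l.rightF s, y (true :: p)) ≤ 1 - q (true :: s) := by
          intro s hs
          have := hR _ (hmem s hs)
          rwa [rightF_node_true,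
            Finset.sum_image (fun a _ b _ h => cons_inj _ h)] at this
        have IH := ihl (fun s => q (true :: s)) (fun p => y (true :: p)) hL' hR' ℓ' hℓ'
        have hLSF : (∑ s ∈ (node l r).LSF (true :: ℓ'), (1 - q s)) =
            (1 - q []) + ∑ s ∈ l.LSF ℓ', (1 - q (true :: s)) := by
          rw [LSF_node_cons_true, Finset.sum_insert (by
            simp only [Finset.mem_image]; rintro ⟨x, _, h⟩; simp at h),
            Finset.sum_image (fun a _ b _ h => cons_inj _ h)]
        have hRSF : (∑ s ∈ (node l r).RSF (true :: ℓ'), q s) =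
            ∑ s ∈ l.RSF ℓ', q (true :: s) := by
          rw [RSF_node_cons_true, Finset.sum_image (fun a _ b _ h => cons_inj _ h)]
        rw [hsum, hLSF, hRSF]
        linarith
      · -- right child
        have hmem : ∀ s ∈ r.splitsF, (false :: s) ∈ (node l r).splitsF := by
          intro s hs; simp only [splitsF, Finset.mem_insert, Finset.mem_union,
            Finset.mem_image]; exact Or.inr (Or.inr ⟨s, hs, rfl⟩)
        have hL' : ∀ s ∈ r.splitsF,
            (∑ p ∈ r.leftF s, y (false :: p)) ≤ q (false :: s) := by
          intro s hs
          have := hL _ (hmem s hs)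
          rwa [leftF_node_false,
            Finset.sum_image (fun a _ b _ h => cons_inj _ h)] at this
        have hR' : ∀ s ∈ r.splitsF,
            (∑ p ∈ r.rightF s, y (false :: p)) ≤ 1 - q (false :: s) := by
          intro s hs
          have := hR _ (hmem s hs)
          rwa [rightF_node_false,
            Finset.sum_image (fun a _ b _ h => cons_inj _ h)] at this
        have IH := ihr (fun s => q (false :: s)) (fun p => y (false :: p)) hL' hR' ℓ' hℓ'
        have hRSF : (∑ s ∈ (node l r).RSF (false :: ℓ'), q s) =
            q [] + ∑ s ∈ r.RSF ℓ', q (false :: s) := by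
          rw [RSF_node_cons_false, Finset.sum_insert (by
            simp only [Finset.mem_image]; rintro ⟨x, _, h⟩; simp at h),
            Finset.sum_image (fun a _ b _ h => cons_inj _ h)]
        have hLSF : (∑ s ∈ (node l r).LSF (false :: ℓ'), (1 - q s)) =
            ∑ s ∈ r.LSF ℓ', (1 - q (false :: s)) := by
          rw [LSF_node_cons_false, Finset.sum_image (fun a _ b _ h => cons_inj _ h)]
        rw [hsum, hLSF, hRSF]
        linarith

end BTree

/-- lower-bound constraint derivation: if `(x, y)` satisfies
`Σ_{ℓ'} y_{ℓ'} = 1`, `y ≥ 0` and all left/right split constraints with query values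
`q s ∈ [0,1]`, then for every leaf `ℓ`,
`y_ℓ ≥ Σ_{s ∈ LS(ℓ)} q s + Σ_{s ∈ RS(ℓ)} (1 − q s) − (|LS(ℓ)| + |RS(ℓ)| − 1)`. -/
theorem stdLin_lower_bound (t : BTree) (q : List Bool → ℝ)
    (hq : ∀ s ∈ t.splitsF, 0 ≤ q s ∧ q s ≤ 1)
    (y : List Bool → ℝ) (hy : t.FeasRelax q y)
    (ℓ : List Bool) (hℓ : ℓ ∈ t.leavesF) :
    y ℓ ≥ (∑ s ∈ t.LSF ℓ, q s) + (∑ s ∈ t.RSF ℓ, (1 - q s))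
      - (((t.LSF ℓ).card : ℝ) + ((t.RSF ℓ).card : ℝ) - 1) := by
  obtain ⟨hsum1, _, hL, hR⟩ := hy
  have key := BTree.key_induction t q y hL hR ℓ hℓ
  rw [hsum1] at key
  have h1 : (∑ s ∈ t.LSF ℓ, (1 - q s)) =
      ((t.LSF ℓ).card : ℝ) - ∑ s ∈ t.LSF ℓ, q s := by
    rw [Finset.sum_sub_distrib, Finset.sum_const, nsmul_eq_mul, mul_one]
  have h2 : (∑ s ∈ t.RSF ℓ, (1 - q s)) =
      ((t.RSF ℓ).card : ℝ) - ∑ s ∈ t.RSF ℓ, q s := by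
    rw [Finset.sum_sub_distrib, Finset.sum_const, nsmul_eq_mul, mul_one]
  linarith
end
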